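/- (Abstract plastic correction, forward direction.) Let ĝ : ℝ² → ℝ be continuously differentiable with ∂ĝ/∂ϱ(p,ϱ) ≥ 0 for all (p,ϱ), and write ĝ_V = ∂ĝ/∂p, ĝ_ϱ = ∂ĝ/∂ϱ. Let f̂ : ℝ³ × [0,∞) → ℝ, let ℓ̂ : ℝ³ × [0,∞) → (0,∞), let H : [0,∞) → [0,∞) be nondecreasing and continuous with H(0) = 0, and let r̃ : [−1,1] → ℝ be continuous. Assume the trial data satisfy ϱ^tr > 0. Suppose (σ, ε̄^p, Δλ) with Δλ > 0 satisfies: σ = σ^tr − Δλ·[K·ĝ_V(p(σ), ϱ(σ))·I + 2G·ĝ_ϱ(p(σ), ϱ(σ))·n̂] for some n̂ ∈ ∂ϱ(σ); ε̄^p = ε̄^{p,tr} + Δλ·ℓ̂(p(σ), ϱ(σ), ϱ̃(σ), H(ε̄^p)), where ϱ̃(σ) = ϱ(σ)·r̃(cos θ(σ)) for ϱ(σ) > 0 and ϱ̃(σ) = 0 otherwise; and f̂(p(σ), ϱ(σ), ϱ_e(σ), H(ε̄^p)) = 0. Then, writing p = p(σ) and ϱ = ϱ(σ), the quadruple (p,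 ϱ, ε̄^p, Δλ) satisfies: p = p^tr − Δλ·K·ĝ_V(p, ϱ); ϱ = max(0, ϱ^tr − Δλ·2G·ĝ_ϱ(p, ϱ)); ε̄^p = ε̄^{p,tr} + Δλ·ℓ̂(p, ϱ, ϱ·r̃(cos θ(σ^tr)), H(ε̄^p)); and f̂(p, ϱ, ϱ·r_e(cos θ(σ^tr)), H(ε̄^p)) = 0. -/

import Mathlib

open Matrix

noncomputable section

/-- The space of real 3×3 matrices (we restrict to symmetric ones via `Matrix.IsSymm`). -/
abbrev Mat3 := Matrix (Fin 3) (Fin 3) ℝ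

/-- Frobenius inner product (for symmetric matrices): ⟨A,B⟩ = tr(A·B). -/
def finner (A B : Mat3) : ℝ := (A * B).trace

/-- Norm induced by `finner` (Frobenius norm on symmetric matrices). -/
def fnorm (A : Mat3) : ℝ := Real.sqrt (finner A A)

/-- Hydrostatic pressure: p(σ) = tr(σ)/3. -/
def pvol (σ : Mat3) : ℝ := σ.trace / 3

/-- Deviatoric part: dev(σ) = σ − p(σ)·I. -/
def devm (σ : Mat3) : Mat3 := σ - pvol σ • (1 : Mat3)

/-- ϱ(σ) = ‖dev(σ)‖. -/
def rho (σ : Mat3) : ℝ := fnorm (devm σ)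

/-- The subdifferential ∂ϱ(σ): symmetric matrices n̂ with
ϱ(τ) ≥ ϱ(σ) + ⟨n̂, τ − σ⟩ for all symmetric τ. -/
def subgradRho (σ : Mat3) : Set Mat3 :=
  {n : Mat3 | n.IsSymm ∧ ∀ τ : Mat3, τ.IsSymm → rho σ + finner n (τ - σ) ≤ rho τ}

/-- Lode angle θ(σ) = (1/3)·arccos((3√3/2)·J₃/J₂^{3/2}), with J₂ = ϱ²/2 and
J₃ = tr(dev(σ)³)/3 (meaningful when ϱ(σ) > 0). -/
def lode (σ : Mat3) : ℝ :=
  (1/3) * Real.arccos ((3 * Real.sqrt 3 / 2) *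
    ((devm σ * devm σ * devm σ).trace / 3) / Real.rpow (rho σ ^ 2 / 2) (3/2))

/-- Willam–Warnke function r_e with eccentricity parameter e. -/
def rW (e x : ℝ) : ℝ :=
  (4 * (1 - e^2) * x^2 + (2*e - 1)^2) /
    (2 * (1 - e^2) * x + (2*e - 1) * Real.sqrt (4 * (1 - e^2) * x^2 + 5*e^2 - 4*e))

/-- ϱ_e(σ) = ϱ(σ)·r_e(cos θ(σ)) for ϱ(σ) > 0, and ϱ_e(σ) = 0 for ϱ(σ) = 0. -/
def rhoE (e : ℝ) (σ : Mat3) : ℝ :=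
  if rho σ = 0 then 0 else rho σ * rW e (Real.cos (lode σ))

/-- m_g'(p) = A_g·exp((p − f̄_t/3)/(B_g·f̄_c)). -/
def mgp (Ag Bg fc ft p : ℝ) : ℝ := Ag * Real.exp ((p - ft/3) / (Bg * fc))

/-- Jirásek–Grassl yield function f̂(p,ϱ,ϱ_e) = (3/2)(ϱ/f̄_c)² + m₀(ϱ_e/(√6 f̄_c) + p/f̄_c) − 1. -/
def fJG (m0 fc p ϱ ϱe : ℝ) : ℝ :=
  (3/2) * (ϱ/fc)^2 + m0 * (ϱe / (Real.sqrt 6 * fc) + p/fc) - 1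

/-- ϱ̃(σ) = ϱ(σ)·r̃(cos θ(σ)) for ϱ(σ) > 0, and 0 otherwise. -/
def rhoTilde (rt : ℝ → ℝ) (σ : Mat3) : ℝ :=
  if rho σ = 0 then 0 else rho σ * rt (Real.cos (lode σ))

/-!
Write `σ^tr = σ + a·I + b·n̂` with `b = Δλ·2G·ĝ_ϱ ≥ 0`. Since `ϱ` is positively homogeneous and
blind to pressure, its subgradient `n̂` is traceless with `⟨n̂, σ⟩ = ϱ(σ)` and `‖n̂‖ ≤ 1`; the
equality case of Cauchy–Schwarz then forces `dev(σ) = ϱ(σ)·n̂`. So the trace of `σ^tr` only sees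
`a`, and `dev(σ^tr) = (ϱ(σ) + b)·n̂`. If `ϱ(σ) > 0`, then `‖n̂‖ = 1`, `ϱ(σ^tr) = ϱ(σ) + b`, and
`dev(σ^tr)` is a positive multiple of `dev(σ)`, which leaves the Lode angle unchanged; if
`ϱ(σ) = 0`, then `ϱ(σ^tr) = b‖n̂‖ ≤ b`.
-/

section FrobeniusForm

lemma finner_comm (A B : Mat3) : finner A B = finner B A := trace_mul_comm A B

lemma finner_sub_right (A B C : Mat3) : finner A (B - C) = finner A B - finner A C := by
  simp [finner, Matrix.mul_sub]

lemma finner_smul_right (c : ℝ) (A B : Mat3) : finner A (c • B) = c * finner A B := by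
  simp [finner]

lemma finner_one (A : Mat3) : finner A 1 = A.trace := by simp [finner]

lemma finner_add_self (A B : Mat3) :
    finner (A + B) (A + B) = finner A A + 2 * finner A B + finner B B := by
  simp only [finner, Matrix.add_mul, Matrix.mul_add, Matrix.trace_add, trace_mul_comm B A]
  ring

lemma finner_sub_smul_self (A B : Mat3) (c : ℝ) :
    finner (A - c • B) (A - c • B) = finner A A - 2 * c * finner A B + c ^ 2 * finner B B := by
  simp only [finner, Matrix.sub_mul, Matrix.mul_sub, smul_mul_assoc, mul_smul_comm,
    Matrix.trace_sub, Matrix.trace_smul, smul_eq_mul, trace_mul_comm B A]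
  ring

variable {A : Mat3}

lemma Matrix.IsSymm.finner_self_eq (hA : A.IsSymm) : finner A A = (Aᴴ * A).trace := by
  rw [conjTranspose_eq_transpose_of_trivial, hA.eq, finner]

lemma finner_self_nonneg (hA : A.IsSymm) : 0 ≤ finner A A :=
  hA.finner_self_eq ▸ (posSemidef_conjTranspose_mul_self A).trace_nonneg

lemma finner_self_eq_zero_iff (hA : A.IsSymm) : finner A A = 0 ↔ A = 0 :=
  hA.finner_self_eq ▸ trace_conjTranspose_mul_self_eq_zero_iff

lemma fnorm_sq (hA : A.IsSymm) : fnorm A ^ 2 = finner A A :=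
  Real.sq_sqrt (finner_self_nonneg hA)

lemma fnorm_smul (c : ℝ) (A : Mat3) : fnorm (c • A) = |c| * fnorm A := by
  rw [fnorm, fnorm, finner_smul_right, finner_comm, finner_smul_right, ← mul_assoc, ← sq,
    Real.sqrt_mul (sq_nonneg c), Real.sqrt_sq_eq_abs]

end FrobeniusForm

lemma devm_add (A B : Mat3) : devm (A + B) = devm A + devm B := by
  simp only [devm, pvol, trace_add]
  module

lemma devm_smul (c : ℝ) (A : Mat3) : devm (c • A) = c • devm A := by
  simp only [devm, pvol, trace_smul, smul_eq_mul]
  module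

lemma devm_smul_one (t : ℝ) : devm (t • (1 : Mat3)) = 0 := by
  simp [devm, pvol, trace_smul]

lemma devm_of_trace_eq_zero {A : Mat3} (hA : A.trace = 0) : devm A = A := by
  simp [devm, pvol, hA]

lemma devm_isSymm {A : Mat3} (hA : A.IsSymm) : (devm A).IsSymm :=
  hA.sub (isSymm_one.smul _)

lemma devm_add_smul_one_add_smul (σ : Mat3) (a b : ℝ) {n : Mat3} (hn : n.trace = 0) :
    devm (σ + a • (1 : Mat3) + b • n) = devm σ + b • n := by
  rw [devm_add, devm_add, devm_smul_one, devm_smul, devm_of_trace_eq_zero hn, add_zero]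

lemma pvol_add_smul_one_add_smul (σ : Mat3) (a b : ℝ) {n : Mat3} (hn : n.trace = 0) :
    pvol (σ + a • (1 : Mat3) + b • n) = pvol σ + a := by
  simp only [pvol, trace_add, trace_smul, trace_one, hn, smul_eq_mul, Fintype.card_fin]
  ring

lemma rho_nonneg (σ : Mat3) : 0 ≤ rho σ := Real.sqrt_nonneg _

lemma rho_zero : rho 0 = 0 := by
  simp [rho, devm, pvol, fnorm, finner]

lemma rho_smul (c : ℝ) (σ : Mat3) : rho (c • σ) = |c| * rho σ := by
  rw [rho, devm_smul, fnorm_smul, rho]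

lemma rho_add_smul_one (σ : Mat3) (t : ℝ) : rho (σ + t • (1 : Mat3)) = rho σ := by
  rw [rho, devm_add, devm_smul_one, add_zero, rho]

lemma rho_sq {σ : Mat3} (hσ : σ.IsSymm) : rho σ ^ 2 = finner (devm σ) (devm σ) :=
  fnorm_sq (devm_isSymm hσ)

lemma rpow_three_halves_mul_sq_div_two {c : ℝ} (hc : 0 ≤ c) (x : ℝ) :
    ((c * x) ^ 2 / 2) ^ (3 / 2 : ℝ) = c ^ 3 * (x ^ 2 / 2) ^ (3 / 2 : ℝ) := by
  rw [show (c * x) ^ 2 / 2 = c ^ 2 * (x ^ 2 / 2) by ring, Real.mul_rpow (by positivity)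
    (by positivity), ← Real.rpow_natCast c 2, ← Real.rpow_mul hc]
  norm_num

lemma lode_eq_of_devm_eq_smul {σ τ : Mat3} {c : ℝ} (hc : 0 < c) (h : devm τ = c • devm σ) :
    lode τ = lode σ := by
  have hρ : rho τ = c * rho σ := by rw [rho, h, fnorm_smul, abs_of_pos hc, rho]
  have hcube : (devm τ * devm τ * devm τ).trace = c ^ 3 * (devm σ * devm σ * devm σ).trace := by
    simp only [h, smul_mul_assoc, mul_smul_comm, trace_smul, smul_smul, smul_eq_mul]
    ring
  have harg : 3 * √3 / 2 * ((devm τ * devm τ * devm τ).trace / 3) / (rho τ ^ 2 / 2) ^ (3 / 2 : ℝ)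
      = 3 * √3 / 2 * ((devm σ * devm σ * devm σ).trace / 3) / (rho σ ^ 2 / 2) ^ (3 / 2 : ℝ) := by
    rw [hcube, hρ, rpow_three_halves_mul_sq_div_two hc.le, mul_div_assoc (c ^ 3),
      mul_left_comm, mul_div_mul_left _ _ (by positivity)]
  exact congrArg (fun x => 1 / 3 * Real.arccos x) harg

section Subgradient

variable {σ n : Mat3} (hσ : σ.IsSymm) (hn : n ∈ subgradRho σ)
include hσ hn

lemma trace_eq_zero_of_mem_subgradRho : n.trace = 0 := by
  have key (t : ℝ) : t * n.trace ≤ 0 := by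
    have := hn.2 (σ + t • 1) (hσ.add (isSymm_one.smul t))
    rwa [add_sub_cancel_left, finner_smul_right, finner_one, rho_add_smul_one,
      add_le_iff_nonpos_right] at this
  linarith [key 1, key (-1)]

lemma finner_eq_rho_of_mem_subgradRho : finner n σ = rho σ := by
  have h0 := hn.2 0 isSymm_zero
  have h2 := hn.2 ((2 : ℝ) • σ) (hσ.smul 2)
  rw [zero_sub, ← neg_one_smul ℝ σ, finner_smul_right, rho_zero] at h0
  rw [show (2 : ℝ) • σ - σ = σ by module, rho_smul, abs_two] at h2
  linarith

lemma finner_devm_eq_rho_of_mem_subgradRho : finner n (devm σ) = rho σ := by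
  rw [devm, finner_sub_right, finner_smul_right, finner_one,
    trace_eq_zero_of_mem_subgradRho hσ hn, finner_eq_rho_of_mem_subgradRho hσ hn, mul_zero,
    sub_zero]

lemma finner_self_le_one_of_mem_subgradRho : finner n n ≤ 1 := by
  have hN := finner_self_nonneg hn.1
  have h1 := hn.2 (σ + n) (hσ.add hn.1)
  have hsq : rho (σ + n) ^ 2 = rho σ ^ 2 + 2 * rho σ + finner n n := by
    rw [rho_sq (hσ.add hn.1), devm_add, devm_of_trace_eq_zero
      (trace_eq_zero_of_mem_subgradRho hσ hn), finner_add_self, finner_comm (devm σ) n,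
      finner_devm_eq_rho_of_mem_subgradRho hσ hn, rho_sq hσ]
  rw [add_sub_cancel_left] at h1
  -- squaring `ϱ σ + ‖n‖² ≤ ϱ (σ + n)` gives `(‖n‖² - 1) (2 ϱ σ + ‖n‖²) ≤ 0`
  nlinarith [rho_nonneg σ, pow_le_pow_left₀ (add_nonneg (rho_nonneg σ) hN) h1 2]

lemma fnorm_le_one_of_mem_subgradRho : fnorm n ≤ 1 :=
  Real.sqrt_le_one.mpr (finner_self_le_one_of_mem_subgradRho hσ hn)

lemma devm_eq_rho_smul_of_mem_subgradRho : devm σ = rho σ • n := by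
  have hN := finner_self_le_one_of_mem_subgradRho hσ hn
  have hsymm : (devm σ - rho σ • n).IsSymm := (devm_isSymm hσ).sub (hn.1.smul _)
  have hle : finner (devm σ - rho σ • n) (devm σ - rho σ • n) ≤ 0 := by
    rw [finner_sub_smul_self, finner_comm (devm σ) n, finner_devm_eq_rho_of_mem_subgradRho hσ hn,
      ← rho_sq hσ]
    nlinarith [sq_nonneg (rho σ)]
  rw [← sub_eq_zero, ← finner_self_eq_zero_iff hsymm]
  exact le_antisymm hle (finner_self_nonneg hsymm)

lemma fnorm_eq_one_of_mem_subgradRho (hρ : 0 < rho σ) : fnorm n = 1 := by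
  have h := congrArg fnorm (devm_eq_rho_smul_of_mem_subgradRho hσ hn)
  rw [fnorm_smul, abs_of_pos hρ, ← rho] at h
  exact (mul_eq_left₀ hρ.ne').mp h.symm

variable {b : ℝ} (a : ℝ)

lemma devm_add_smul_subgrad : devm (σ + a • (1 : Mat3) + b • n) = (rho σ + b) • n := by
  rw [devm_add_smul_one_add_smul σ a b (trace_eq_zero_of_mem_subgradRho hσ hn),
    devm_eq_rho_smul_of_mem_subgradRho hσ hn, add_smul]

variable (hb : 0 ≤ b)
include hb

lemma rho_add_smul_subgrad : rho (σ + a • (1 : Mat3) + b • n) = (rho σ + b) * fnorm n := by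
  rw [rho, devm_add_smul_subgrad hσ hn a, fnorm_smul, abs_of_nonneg (add_nonneg (rho_nonneg σ) hb)]

lemma lode_add_smul_subgrad (hρ : 0 < rho σ) : lode (σ + a • (1 : Mat3) + b • n) = lode σ := by
  refine lode_eq_of_devm_eq_smul (c := (rho σ + b) / rho σ) (by positivity) ?_
  rw [devm_add_smul_subgrad hσ hn a, devm_eq_rho_smul_of_mem_subgradRho hσ hn, smul_smul,
    div_mul_cancel₀ _ hρ.ne']

lemma rho_eq_max_of_mem_subgradRho : rho σ = max 0 (rho (σ + a • (1 : Mat3) + b • n) - b) := by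
  rw [rho_add_smul_subgrad hσ hn a hb]
  rcases (rho_nonneg σ).lt_or_eq with hρ | hρ
  · rw [fnorm_eq_one_of_mem_subgradRho hσ hn hρ, mul_one, add_sub_cancel_right,
      max_eq_right hρ.le]
  · have hn1 := fnorm_le_one_of_mem_subgradRho hσ hn
    rw [← hρ, zero_add, max_eq_left (by nlinarith)]

end Subgradient

lemma ite_rho_mul_eq_of_lode_eq {σ τ : Mat3} (h : 0 < rho σ → lode σ = lode τ) (f : ℝ → ℝ) :
    (if rho σ = 0 then 0 else rho σ * f (Real.cos (lode σ))) = rho σ * f (Real.cos (lode τ)) := by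
  split_ifs with hρ
  · rw [hρ, zero_mul]
  · rw [h ((rho_nonneg σ).lt_of_ne' hρ)]

lemma rhoTilde_eq_of_lode_eq {σ τ : Mat3} (h : 0 < rho σ → lode σ = lode τ) (rt : ℝ → ℝ) :
    rhoTilde rt σ = rho σ * rt (Real.cos (lode τ)) :=
  ite_rho_mul_eq_of_lode_eq h rt

lemma rhoE_eq_of_lode_eq {σ τ : Mat3} (h : 0 < rho σ → lode σ = lode τ) (e : ℝ) :
    rhoE e σ = rho σ * rW e (Real.cos (lode τ)) :=
  ite_rho_mul_eq_of_lode_eq h (rW e)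

theorem abstract_plastic_corrector_forward_general
    (G K e : ℝ) (hG : 0 < G)
    (gV gϱ : ℝ → ℝ → ℝ)
    (hgϱnn : ∀ p ϱ : ℝ, 0 ≤ gϱ p ϱ)
    (fh : ℝ → ℝ → ℝ → ℝ → ℝ)
    (ℓh : ℝ → ℝ → ℝ → ℝ → ℝ)
    (H : ℝ → ℝ)
    (rt : ℝ → ℝ)
    (σtr : Mat3) (εtr : ℝ)
    (σ : Mat3) (hσ : σ.IsSymm) (εp Δl : ℝ) (hΔl : 0 < Δl)
    (n : Mat3) (hn : n ∈ subgradRho σ)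
    (hσeq : σ = σtr - Δl • ((K * gV (pvol σ) (rho σ)) • (1 : Mat3) +
      (2 * G * gϱ (pvol σ) (rho σ)) • n))
    (hεeq : εp = εtr + Δl * ℓh (pvol σ) (rho σ) (rhoTilde rt σ) (H εp))
    (hf : fh (pvol σ) (rho σ) (rhoE e σ) (H εp) = 0) :
    pvol σ = pvol σtr - Δl * K * gV (pvol σ) (rho σ) ∧
    rho σ = max 0 (rho σtr - Δl * (2 * G * gϱ (pvol σ) (rho σ))) ∧
    εp = εtr + Δl * ℓh (pvol σ) (rho σ) (rho σ * rt (Real.cos (lode σtr))) (H εp) ∧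
    fh (pvol σ) (rho σ) (rho σ * rW e (Real.cos (lode σtr))) (H εp) = 0 := by
  have hb : 0 ≤ Δl * (2 * G * gϱ (pvol σ) (rho σ)) := by
    have := hgϱnn (pvol σ) (rho σ)
    positivity
  have hσtr : σtr = σ + (Δl * (K * gV (pvol σ) (rho σ))) • (1 : Mat3) +
      (Δl * (2 * G * gϱ (pvol σ) (rho σ))) • n := by
    rw [← eq_sub_iff_add_eq.mp hσeq]
    module
  have hlode : 0 < rho σ → lode σ = lode σtr := fun hρ =>
    hσtr ▸ (lode_add_smul_subgrad hσ hn _ hb hρ).symm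
  refine ⟨?_, ?_, ?_, ?_⟩
  · rw [hσtr, pvol_add_smul_one_add_smul _ _ _ (trace_eq_zero_of_mem_subgradRho hσ hn)]
    ring
  · rw [hσtr]
    exact rho_eq_max_of_mem_subgradRho hσ hn _ hb
  · rwa [rhoTilde_eq_of_lode_eq hlode] at hεeq
  · rwa [rhoE_eq_of_lode_eq hlode] at hf

/-- abstract plastic correction, forward direction. -/
theorem abstract_plastic_corrector_forward
    (G K e : ℝ) (hG : 0 < G) (hK : 0 < K) (he : e ∈ Set.Icc (1/2 : ℝ) 1)
    (gh gV gϱ : ℝ → ℝ → ℝ)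
    (hgC1 : ContDiff ℝ 1 (fun x : ℝ × ℝ => gh x.1 x.2))
    (hgV : ∀ p ϱ : ℝ, HasDerivAt (fun x => gh x ϱ) (gV p ϱ) p)
    (hgϱ : ∀ p ϱ : ℝ, HasDerivAt (fun x => gh p x) (gϱ p ϱ) ϱ)
    (hgϱnn : ∀ p ϱ : ℝ, 0 ≤ gϱ p ϱ)
    (fh : ℝ → ℝ → ℝ → ℝ → ℝ)
    (ℓh : ℝ → ℝ → ℝ → ℝ → ℝ) (hℓ : ∀ a b c d : ℝ, 0 < ℓh a b c d)
    (H : ℝ → ℝ) (Hmono : MonotoneOn H (Set.Ici 0))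
    (Hcont : ContinuousOn H (Set.Ici 0)) (H0 : H 0 = 0) (Hnn : ∀ x ≥ (0:ℝ), 0 ≤ H x)
    (rt : ℝ → ℝ) (hrt : Continuous rt)
    (σtr : Mat3) (hσtr : σtr.IsSymm) (εtr : ℝ) (hεtr : 0 ≤ εtr)
    (hϱtr : 0 < rho σtr)
    (σ : Mat3) (hσ : σ.IsSymm) (εp Δl : ℝ) (hΔl : 0 < Δl)
    (n : Mat3) (hn : n ∈ subgradRho σ)
    (hσeq : σ = σtr - Δl • ((K * gV (pvol σ) (rho σ)) • (1 : Mat3) +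
      (2 * G * gϱ (pvol σ) (rho σ)) • n))
    (hεeq : εp = εtr + Δl * ℓh (pvol σ) (rho σ) (rhoTilde rt σ) (H εp))
    (hf : fh (pvol σ) (rho σ) (rhoE e σ) (H εp) = 0) :
    pvol σ = pvol σtr - Δl * K * gV (pvol σ) (rho σ) ∧
    rho σ = max 0 (rho σtr - Δl * (2 * G * gϱ (pvol σ) (rho σ))) ∧
    εp = εtr + Δl * ℓh (pvol σ) (rho σ) (rho σ * rt (Real.cos (lode σtr))) (H εp) ∧
    fh (pvol σ) (rho σ) (rho σ * rW e (Real.cos (lode σtr))) (H εp) = 0 :=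
  abstract_plastic_corrector_forward_general G K e hG gV gϱ hgϱnn fh ℓh H rt σtr εtr σ hσ εp Δl hΔl
    n hn hσeq hεeq hf
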